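/- (Bounded backward solution of an unstable linear recursion) Let A be a real invertible q×q matrix all of whose (complex) eigenvalues have modulus > 1, let B be a real q×p matrix, and let w : ℤ → ℝ^p be a bounded sequence. Then for every k ∈ ℤ the series x(k) := −Σ_{i=k+1}^{∞} A^{k−i} B w(i−1) (where A^{k−i} := (A^{−1})^{i−k}) converges absolutely, the sequence x is bounded, and x satisfies x(k) = A^{−1} x(k+1) − A^{−1} B w(k), equivalently x(k+1) = A x(k) + B w(k), for all k ∈ ℤ. -/

import Mathlib

/-! The eigenvalues of `A⁻¹` are the inverses of those of `A`, so the complexification of `A⁻¹`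
has spectral radius `< 1`, and Gelfand's formula makes `‖A⁻¹ ^ n‖` eventually smaller than `r ^ n`
for some `r < 1`. The series for `x(k)` is therefore dominated by
`‖B‖ (sup ‖w‖) ∑ ‖A⁻¹ ^ (j + 1)‖`, uniformly in `k`, and splitting off its first term gives
`x(k) = A⁻¹ x(k + 1) − A⁻¹ B w(k)`. -/

noncomputable section

/-- All complex eigenvalues of the real matrix have modulus > 1. -/
def SpecGtOne {q : ℕ} (M : Matrix (Fin q) (Fin q) ℝ) : Prop :=
  ∀ z ∈ spectrum ℂ (M.map (algebraMap ℝ ℂ)), 1 < ‖z‖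

/-- The candidate bounded backward solution `x(k) = −Σ_{i=k+1}^{∞} A^{k−i} B w(i−1)`,
reindexed by `i = k + 1 + j` so that `A^{k−i} = (A⁻¹)^{j+1}` and `w(i−1) = w(k+j)`. -/
noncomputable def bwdSol {q p : ℕ} (A : Matrix (Fin q) (Fin q) ℝ)
    (B : Matrix (Fin q) (Fin p) ℝ) (w : ℤ → Fin p → ℝ) (k : ℤ) : Fin q → ℝ :=
  -∑' j : ℕ, (A⁻¹ ^ (j + 1)).mulVec (B.mulVec (w (k + (j : ℤ))))

open Filter Topology Matrix

-- Any submultiplicative matrix norm would do; this one is compatible with the sup norm on vectors.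
attribute [local instance] Matrix.linftyOpNormedAddCommGroup Matrix.linftyOpNormedRing
  Matrix.linftyOpNormedAlgebra

theorem summable_norm_pow_of_spectralRadius_lt_one {A : Type*} [NormedRing A]
    [NormedAlgebra ℂ A] [CompleteSpace A] {a : A} (ha : spectralRadius ℂ a < 1) :
    Summable fun n : ℕ => ‖a ^ n‖ := by
  obtain ⟨r, hρr, hr1⟩ := ENNReal.lt_iff_exists_nnreal_btwn.mp ha
  refine Summable.of_norm_bounded_eventually_nat
    (summable_geometric_of_lt_one r.2 (by exact_mod_cast hr1)) ?_
  have gelfand := spectrum.pow_nnnorm_pow_one_div_tendsto_nhds_spectralRadius a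
  filter_upwards [gelfand.eventually_lt_const hρr, eventually_gt_atTop 0] with n hn hn0
  rw [one_div, ENNReal.rpow_inv_lt_iff (Nat.cast_pos.mpr hn0), ENNReal.rpow_natCast] at hn
  rw [norm_norm]
  exact_mod_cast hn.le

theorem spectralRadius_inv_lt_one {𝕜 A : Type*} [NormedField 𝕜] [ProperSpace 𝕜] [NormedRing A]
    [NormedAlgebra 𝕜 A] [CompleteSpace A] (u : Aˣ) (hu : ∀ z ∈ spectrum 𝕜 (u : A), 1 < ‖z‖) :
    spectralRadius 𝕜 (↑u⁻¹ : A) < 1 := by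
  rcases (spectrum 𝕜 (↑u⁻¹ : A)).eq_empty_or_nonempty with h | h
  · simp [spectralRadius, h]
  · rw [← ENNReal.coe_one]
    refine spectrum.spectralRadius_lt_of_forall_lt_of_nonempty h fun z hz => ?_
    rw [← spectrum.map_inv, Set.mem_inv] at hz
    have := hu _ hz
    rw [norm_inv, one_lt_inv_iff₀] at this
    exact_mod_cast this.2

theorem Matrix.linfty_opNorm_map_eq {m n α β : Type*} [Fintype m] [Fintype n]
    [NormedAddCommGroup α] [NormedAddCommGroup β] (A : Matrix m n α) (f : α → β)
    (hf : ∀ a, ‖f a‖ = ‖a‖) : ‖A.map f‖ = ‖A‖ := by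
  have hf' (a : α) : ‖f a‖₊ = ‖a‖₊ := NNReal.eq (hf a)
  simp only [linfty_opNorm_def, map_apply, hf']

theorem Matrix.summable_norm_pow_of_spectralRadius_map_lt_one {n : Type*} [Fintype n]
    [DecidableEq n] (M : Matrix n n ℝ) (hM : spectralRadius ℂ (M.map (algebraMap ℝ ℂ)) < 1) :
    Summable fun k : ℕ => ‖M ^ k‖ := by
  have hpow (k : ℕ) : (M ^ k).map (algebraMap ℝ ℂ) = M.map (algebraMap ℝ ℂ) ^ k :=
    map_pow (algebraMap ℝ ℂ).mapMatrix M k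
  simpa only [← hpow, linfty_opNorm_map_eq _ _ (norm_algebraMap' ℂ (𝕜 := ℝ))] using
    summable_norm_pow_of_spectralRadius_lt_one hM

theorem summable_norm_inv_pow_of_specGtOne {q : ℕ} (A : Matrix (Fin q) (Fin q) ℝ)
    (hA : SpecGtOne A) (hAdet : IsUnit A.det) : Summable fun k : ℕ => ‖A⁻¹ ^ k‖ := by
  obtain ⟨u, rfl⟩ := (isUnit_iff_isUnit_det A).mpr hAdet
  let uℂ := Units.map (algebraMap ℝ ℂ).mapMatrix.toMonoidHom u
  have hρ : spectralRadius ℂ (↑uℂ⁻¹ : Matrix (Fin q) (Fin q) ℂ) < 1 :=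
    spectralRadius_inv_lt_one uℂ hA
  rw [← coe_units_inv]
  exact summable_norm_pow_of_spectralRadius_map_lt_one _ hρ

section BackwardSeries

variable {𝕜 n : Type*} [NormedField 𝕜] [Fintype n] [DecidableEq n]
  {M : Matrix n n 𝕜} {v : ℤ → n → 𝕜} {C : ℝ}

def backwardSeries (M : Matrix n n 𝕜) (v : ℤ → n → 𝕜) (k : ℤ) : n → 𝕜 :=
  ∑' j : ℕ, (M ^ (j + 1)) *ᵥ v (k + j)

theorem norm_pow_succ_mulVec_le (hv : ∀ k, ‖v k‖ ≤ C) (k : ℤ) (j : ℕ) :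
    ‖(M ^ (j + 1)) *ᵥ v (k + j)‖ ≤ ‖M ^ (j + 1)‖ * C :=
  (linfty_opNorm_mulVec _ _).trans (mul_le_mul_of_nonneg_left (hv _) (norm_nonneg _))

theorem summable_norm_pow_succ_mulVec [CompleteSpace 𝕜] (hM : Summable fun j : ℕ => ‖M ^ j‖)
    (hv : ∀ k, ‖v k‖ ≤ C) (k : ℤ) : Summable fun j : ℕ => ‖(M ^ (j + 1)) *ᵥ v (k + j)‖ :=
  .of_nonneg_of_le (fun _ => norm_nonneg _) (norm_pow_succ_mulVec_le hv k)
    (((summable_nat_add_iff 1).mpr hM).mul_right C)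

theorem norm_backwardSeries_le [CompleteSpace 𝕜] (hM : Summable fun j : ℕ => ‖M ^ j‖)
    (hv : ∀ k, ‖v k‖ ≤ C) (k : ℤ) : ‖backwardSeries M v k‖ ≤ (∑' j : ℕ, ‖M ^ (j + 1)‖) * C :=
  calc ‖backwardSeries M v k‖ ≤ ∑' j : ℕ, ‖(M ^ (j + 1)) *ᵥ v (k + j)‖ :=
        norm_tsum_le_tsum_norm (summable_norm_pow_succ_mulVec hM hv k)
    _ ≤ ∑' j : ℕ, ‖M ^ (j + 1)‖ * C :=
        (summable_norm_pow_succ_mulVec hM hv k).tsum_le_tsum (norm_pow_succ_mulVec_le hv k)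
          (((summable_nat_add_iff 1).mpr hM).mul_right C)
    _ = (∑' j : ℕ, ‖M ^ (j + 1)‖) * C := tsum_mul_right

theorem backwardSeries_eq [CompleteSpace 𝕜] (hM : Summable fun j : ℕ => ‖M ^ j‖)
    (hv : ∀ k, ‖v k‖ ≤ C) (k : ℤ) :
    backwardSeries M v k = M *ᵥ v k + M *ᵥ backwardSeries M v (k + 1) := by
  have hmap := (summable_norm_pow_succ_mulVec hM hv (k + 1)).of_norm.map_tsum M.mulVecLin
    (continuous_const.matrix_mulVec continuous_id)
  rw [mulVecLin_apply] at hmap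
  rw [backwardSeries, (summable_norm_pow_succ_mulVec hM hv k).of_norm.tsum_eq_zero_add,
    backwardSeries, hmap]
  congr 1
  · simp
  · refine tsum_congr fun j => ?_
    rw [mulVecLin_apply, mulVec_mulVec, ← pow_succ']
    congr 2
    push_cast
    ring

end BackwardSeries

/-- **Bounded backward solution of an unstable linear recursion.**
If `A` is invertible with all eigenvalues of modulus > 1 and `w` is bounded, then for every `k`
the series defining `x(k)` converges absolutely, `x` is bounded, and
`x(k) = A⁻¹ x(k+1) − A⁻¹ B w(k)`, equivalently `x(k+1) = A x(k) + B w(k)`. -/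
theorem bounded_backward_solution {q p : ℕ}
    (A : Matrix (Fin q) (Fin q) ℝ) (hA : SpecGtOne A) (hAdet : IsUnit A.det)
    (B : Matrix (Fin q) (Fin p) ℝ) (w : ℤ → Fin p → ℝ)
    (hw : ∃ C : ℝ, ∀ k : ℤ, ‖w k‖ ≤ C) :
    (∀ k : ℤ, Summable fun j : ℕ => ‖(A⁻¹ ^ (j + 1)).mulVec (B.mulVec (w (k + (j : ℤ))))‖) ∧
    (∃ C : ℝ, ∀ k : ℤ, ‖bwdSol A B w k‖ ≤ C) ∧
    (∀ k : ℤ, bwdSol A B w k =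
        A⁻¹.mulVec (bwdSol A B w (k + 1)) - A⁻¹.mulVec (B.mulVec (w k))) ∧
    (∀ k : ℤ, bwdSol A B w (k + 1) = A.mulVec (bwdSol A B w k) + B.mulVec (w k)) := by
  obtain ⟨C, hC⟩ := hw
  have hM := summable_norm_inv_pow_of_specGtOne A hA hAdet
  have hBw (k : ℤ) : ‖B *ᵥ w k‖ ≤ ‖B‖ * C :=
    (linfty_opNorm_mulVec B _).trans (mul_le_mul_of_nonneg_left (hC k) (norm_nonneg B))
  have hx (k : ℤ) : bwdSol A B w k = -backwardSeries A⁻¹ (fun i => B *ᵥ w i) k := rfl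
  have hbound (k : ℤ) : ‖bwdSol A B w k‖ ≤ (∑' j : ℕ, ‖A⁻¹ ^ (j + 1)‖) * (‖B‖ * C) := by
    rw [hx, norm_neg]
    exact norm_backwardSeries_le hM hBw k
  have hback (k : ℤ) : bwdSol A B w k = A⁻¹ *ᵥ bwdSol A B w (k + 1) - A⁻¹ *ᵥ B *ᵥ w k := by
    rw [hx, hx, backwardSeries_eq hM hBw, mulVec_neg]
    abel
  refine ⟨fun k => summable_norm_pow_succ_mulVec hM hBw k, ⟨_, hbound⟩, hback, fun k => ?_⟩
  rw [hback k, mulVec_sub, mulVec_mulVec, mulVec_mulVec, mul_nonsing_inv A hAdet, one_mulVec,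
    one_mulVec]
  abel
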